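/- Let ℓ ≥ 1 be an integer and suppose that for each integer m with 1 ≤ m ≤ ℓ there is a constant c_m > 0 such that |π(y) − α_m(y)| ≤ c_m·y/(log y)^{m+1} for all y ≥ 2. Define S_n(x) = Σ_{p ≤ √x} (1/p)·(1 − (log p)/(log x))^{−n}. Then Σ_{p ≤ √x} π(x/p) = Σ_{n=1}^{ℓ} (n−1)!·x·S_n(x)/(log x)^n + o(x/(log x)^ℓ) as x → ∞. -/

import Mathlib

/-!
Since `log (x / p) = log x * (1 - log p / log x)`, the main term is exactly
`∑_{p ≤ √x} α_ℓ(x / p)`. For `p ≤ √x` we have `x / p ≥ √x` and `log (x / p) ≥ log x / 2`, so the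
hypothesis at `m = ℓ` bounds each `|π(x / p) - α_ℓ(x / p)|` by `2^(ℓ+1) c x / (p (log x)^(ℓ+1))`.
It remains to see that `∑_{p ≤ √x} 1 / p = o(log x)`: the hypothesis at `m = 1` gives the
Chebyshev bound `π(y) ≪ y / log y`, and summing it over dyadic blocks `2^k ≤ p < 2^(k+1)` bounds
the reciprocal sum by a harmonic number of order `log log x`.
-/

open Finset Filter

/-- The finite set of primes `p ≤ y` (for a real bound `y`). -/
noncomputable def primesUpTo (y : ℝ) : Finset ℕ :=
  (Finset.range (⌊y⌋₊ + 1)).filter Nat.Prime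

/-- The prime counting function `π(x)`: the number of primes `p ≤ x`. -/
noncomputable def primePi (x : ℝ) : ℕ := (primesUpTo x).card

/-- `α_m(x) = (x / log x) · ∑_{i=0}^{m-1} i! / (log x)^i`. -/
noncomputable def alpha (m : ℕ) (x : ℝ) : ℝ :=
  x / Real.log x * ∑ i ∈ Finset.range m, (Nat.factorial i : ℝ) / (Real.log x) ^ i

/-- `S_n(x) = ∑_{p ≤ √x} (1/p) (1 - log p / log x)^{-n}`. -/
noncomputable def S (n : ℕ) (x : ℝ) : ℝ :=
  ∑ p ∈ primesUpTo (Real.sqrt x),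
    (1 / (p : ℝ)) * (1 - Real.log p / Real.log x) ^ (-(n : ℤ))

open Real Asymptotics

lemma mem_primesUpTo {p : ℕ} {y : ℝ} (hy : 0 ≤ y) :
    p ∈ primesUpTo y ↔ p.Prime ∧ (p : ℝ) ≤ y := by
  simp [primesUpTo, Nat.le_floor_iff hy, and_comm]

lemma alpha_div_eq_sum_Icc (m : ℕ) {x q : ℝ} (hx : x ≠ 0) (hq : q ≠ 0) (hlx : log x ≠ 0) :
    alpha m (x / q) = ∑ n ∈ Icc 1 m,
      (n - 1).factorial * (x * (1 / q * (1 - log q / log x) ^ (-(n : ℤ)))) / log x ^ n := by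
  set t := 1 - log q / log x
  have hlog : log (x / q) = log x * t := by
    rw [log_div hx hq, mul_sub, mul_one, mul_div_cancel₀ _ hlx]
  clear_value t
  rw [alpha, hlog, mul_sum, ← Ico_add_one_right_eq_Icc, sum_Ico_eq_sum_range]
  refine sum_congr (by simp) fun i _ => ?_
  rw [add_tsub_cancel_left, add_comm 1 i, zpow_neg, zpow_natCast]
  -- when `log q = log x` both sides are junk zeros: `0 ^ (-n) = 0` and `a / 0 = 0`
  rcases eq_or_ne t 0 with ht | ht
  · simp [ht]
  · field_simp
    ring

lemma sum_factorial_mul_S_div_log_pow (ℓ : ℕ) {x : ℝ} (hx : x ≠ 0) (hlx : log x ≠ 0) :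
    ∑ n ∈ Icc 1 ℓ, (n - 1).factorial * (x * S n x) / log x ^ n
      = ∑ p ∈ primesUpTo √x, alpha ℓ (x / p) := by
  simp_rw [S, mul_sum, sum_div]
  rw [sum_comm]
  refine sum_congr rfl fun p hp => (alpha_div_eq_sum_Icc ℓ hx ?_ hlx).symm
  exact Nat.cast_ne_zero.2 (mem_filter.1 hp).2.ne_zero

lemma primePi_le_of_abs_sub_alpha_one_le {c : ℝ} (hc : 0 ≤ c)
    (h : ∀ y : ℝ, 2 ≤ y → |(primePi y : ℝ) - alpha 1 y| ≤ c * y / log y ^ 2)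
    {y : ℝ} (hy : 2 ≤ y) : (primePi y : ℝ) ≤ (1 + c / log 2) * y / log y := by
  have hlog : log 2 ≤ log y := log_le_log two_pos hy
  have hlog2 : 0 < log 2 := log_pos one_lt_two
  have hupper := (abs_le.1 (h y hy)).2
  simp only [alpha, range_one, sum_singleton, Nat.factorial_zero, Nat.cast_one, pow_zero,
    div_one, mul_one] at hupper
  have hlogy : 0 < log y := hlog2.trans_le hlog
  calc (primePi y : ℝ) ≤ y / log y + c * y / log y ^ 2 := by linarith
    _ = (1 + c / log y) * y / log y := by field_simp
    _ ≤ (1 + c / log 2) * y / log y := by gcongr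

lemma sum_inv_filter_log_two_eq_le (z : ℝ) (k : ℕ) :
    ∑ p ∈ (primesUpTo z).filter (fun p => Nat.log 2 p = k), 1 / (p : ℝ)
      ≤ primePi (2 ^ (k + 1)) / 2 ^ k := by
  set P := (primesUpTo z).filter (fun p => Nat.log 2 p = k)
  have hsub : P ⊆ primesUpTo (2 ^ (k + 1)) := by
    intro p hp
    obtain ⟨hpz, rfl⟩ := mem_filter.1 hp
    have hlt : p < 2 ^ (Nat.log 2 p + 1) := Nat.lt_pow_succ_log_self one_lt_two p
    rw [mem_primesUpTo (by positivity)]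
    exact ⟨(mem_filter.1 hpz).2, by exact_mod_cast hlt.le⟩
  have hterm : ∀ p ∈ P, 1 / (p : ℝ) ≤ 1 / 2 ^ k := by
    intro p hp
    obtain ⟨hpz, rfl⟩ := mem_filter.1 hp
    have hle : 2 ^ Nat.log 2 p ≤ p := Nat.pow_log_le_self 2 (mem_filter.1 hpz).2.ne_zero
    gcongr
    exact_mod_cast hle
  calc ∑ p ∈ P, 1 / (p : ℝ) ≤ P.card • (1 / 2 ^ k : ℝ) := sum_le_card_nsmul _ _ _ hterm
    _ ≤ primePi (2 ^ (k + 1)) * (1 / 2 ^ k) := by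
      rw [nsmul_eq_mul]; gcongr; exact_mod_cast card_le_card hsub
    _ = primePi (2 ^ (k + 1)) / 2 ^ k := mul_one_div _ _

lemma sum_inv_primesUpTo_le_harmonic {C : ℝ}
    (hpi : ∀ y : ℝ, 2 ≤ y → (primePi y : ℝ) ≤ C * y / log y) (z : ℝ) :
    ∑ p ∈ primesUpTo z, 1 / (p : ℝ) ≤ 2 * C / log 2 * harmonic (Nat.log 2 ⌊z⌋₊ + 1) := by
  have hlog2 : 0 < log 2 := log_pos one_lt_two
  have hmaps : ∀ p ∈ primesUpTo z, Nat.log 2 p ∈ range (Nat.log 2 ⌊z⌋₊ + 1) := fun p hp =>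
    mem_range_succ_iff.2 (Nat.log_mono_right (mem_range_succ_iff.1 (mem_filter.1 hp).1))
  have hharmonic : ∀ n, (harmonic n : ℝ) = ∑ k ∈ range n, 1 / ((k : ℝ) + 1) := by
    simp [harmonic]
  rw [← sum_fiberwise_of_maps_to hmaps, hharmonic, mul_sum]
  refine sum_le_sum fun k _ => ?_
  have h2k : (2 : ℝ) ≤ 2 ^ (k + 1) := le_self_pow₀ one_le_two (Nat.succ_ne_zero k)
  calc _ ≤ (primePi (2 ^ (k + 1)) : ℝ) / 2 ^ k := sum_inv_filter_log_two_eq_le z k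
    _ ≤ C * 2 ^ (k + 1) / log (2 ^ (k + 1)) / 2 ^ k := by gcongr; exact hpi _ h2k
    _ = 2 * C / log 2 * (1 / ((k : ℝ) + 1)) := by
      rw [log_pow]; push_cast; field_simp; ring

lemma isLittleO_sum_inv_primesUpTo_log {C : ℝ} (hC : 0 ≤ C)
    (hpi : ∀ y : ℝ, 2 ≤ y → (primePi y : ℝ) ≤ C * y / log y) :
    (fun z => ∑ p ∈ primesUpTo z, 1 / (p : ℝ)) =o[atTop] log := by
  have hlog2 : 0 < log 2 := log_pos one_lt_two
  have hlogb : Tendsto (fun z => 1 + logb 2 z) atTop atTop :=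
    tendsto_atTop_add_const_left _ 1 (tendsto_logb_atTop one_lt_two)
  have hlogb_log : (fun z => 1 + logb 2 z) =O[atTop] log :=
    isLittleO_const_log_atTop.isBigO.add (isBigO_logb_log.mono le_top)
  have hbound : (fun z => ∑ p ∈ primesUpTo z, 1 / (p : ℝ))
      =O[atTop] (fun z => 1 + log (1 + logb 2 z)) := by
    refine IsBigO.of_bound (2 * C / log 2) ?_
    filter_upwards [eventually_ge_atTop 1] with z hz
    have hfloor : 0 < ⌊z⌋₊ := Nat.floor_pos.2 hz
    have hK : (Nat.log 2 ⌊z⌋₊ : ℝ) ≤ logb 2 z :=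
      (natLog_le_logb _ _).trans (logb_le_logb_of_le one_lt_two (by exact_mod_cast hfloor)
        (Nat.floor_le (by linarith)))
    have hlog : 0 ≤ log (1 + logb 2 z) := log_nonneg (by linarith [logb_nonneg one_lt_two hz])
    rw [norm_of_nonneg (sum_nonneg fun p _ => by positivity), norm_of_nonneg (by linarith)]
    calc _ ≤ 2 * C / log 2 * harmonic (Nat.log 2 ⌊z⌋₊ + 1) :=
          sum_inv_primesUpTo_le_harmonic hpi z
      _ ≤ 2 * C / log 2 * (1 + log (Nat.log 2 ⌊z⌋₊ + 1 : ℕ)) := by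
          gcongr; exact harmonic_le_one_add_log _
      _ ≤ 2 * C / log 2 * (1 + log (1 + logb 2 z)) := by
          gcongr; push_cast; linarith
  exact hbound.trans_isLittleO (isLittleO_const_log_atTop.add
    ((isLittleO_log_id_atTop.comp_tendsto hlogb).trans_isBigO hlogb_log))

lemma half_log_le_log_div {x q : ℝ} (hq : 0 < q) (hqx : q ≤ √x) : log x / 2 ≤ log (x / q) := by
  have hx : 0 < x := sqrt_pos.1 (hq.trans_le hqx)
  rw [log_div hx.ne' hq.ne']
  linarith [log_le_log hq hqx, log_sqrt hx.le]

lemma sqrt_le_div {x q : ℝ} (hq : 0 < q) (hqx : q ≤ √x) : √x ≤ x / q := by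
  have hx : 0 ≤ x := sqrt_pos.1 (hq.trans_le hqx) |>.le
  rw [le_div_iff₀ hq]
  calc √x * q ≤ √x * √x := by gcongr
    _ = x := mul_self_sqrt hx

lemma abs_primePi_sub_alpha_div_le {ℓ : ℕ} {c : ℝ} (hc : 0 ≤ c)
    (h : ∀ y : ℝ, 2 ≤ y → |(primePi y : ℝ) - alpha ℓ y| ≤ c * y / log y ^ (ℓ + 1))
    {x q : ℝ} (hx : 4 ≤ x) (hq : 0 < q) (hqx : q ≤ √x) :
    |(primePi (x / q) : ℝ) - alpha ℓ (x / q)|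
      ≤ c * 2 ^ (ℓ + 1) * (x / log x ^ (ℓ + 1) * (1 / q)) := by
  have hsqrt : 2 ≤ √x := le_sqrt_of_sq_le (by linarith)
  have hlog : 0 < log x / 2 := by have := log_pos (by linarith : (1 : ℝ) < x); positivity
  calc _ ≤ c * (x / q) / log (x / q) ^ (ℓ + 1) := h _ (hsqrt.trans (sqrt_le_div hq hqx))
    _ ≤ c * (x / q) / (log x / 2) ^ (ℓ + 1) := by
      have hhalf := half_log_le_log_div hq hqx
      have hx0 : 0 ≤ x := by linarith
      gcongr
    _ = c * 2 ^ (ℓ + 1) * (x / log x ^ (ℓ + 1) * (1 / q)) := by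
      rw [div_pow]; field_simp

lemma isBigO_sum_primePi_sub_main_term {ℓ : ℕ} {c : ℝ} (hc : 0 ≤ c)
    (h : ∀ y : ℝ, 2 ≤ y → |(primePi y : ℝ) - alpha ℓ y| ≤ c * y / log y ^ (ℓ + 1)) :
    (fun x : ℝ => (∑ p ∈ primesUpTo √x, (primePi (x / p) : ℝ))
        - ∑ n ∈ Icc 1 ℓ, (n - 1).factorial * (x * S n x) / log x ^ n)
      =O[atTop] (fun x => x / log x ^ (ℓ + 1) * ∑ p ∈ primesUpTo √x, 1 / (p : ℝ)) := by
  refine IsBigO.of_bound (c * 2 ^ (ℓ + 1)) ?_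
  filter_upwards [eventually_ge_atTop 4] with x hx
  have hlog : 0 < log x := log_pos (by linarith)
  have hx0 : 0 ≤ x := by linarith
  have hbound : 0 ≤ x / log x ^ (ℓ + 1) * ∑ p ∈ primesUpTo √x, 1 / (p : ℝ) := by positivity
  rw [sum_factorial_mul_S_div_log_pow ℓ (by linarith) hlog.ne', ← sum_sub_distrib,
    Real.norm_eq_abs, norm_of_nonneg hbound, mul_sum, mul_sum]
  refine (abs_sum_le_sum_abs _ _).trans (sum_le_sum fun p hp => ?_)
  obtain ⟨hp, hpx⟩ := (mem_primesUpTo (sqrt_nonneg x)).1 hp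
  exact abs_primePi_sub_alpha_div_le hc h hx (by exact_mod_cast hp.pos) hpx

theorem stmt17 (ℓ : ℕ) (hℓ : 1 ≤ ℓ)
    (hPNT : ∀ m : ℕ, 1 ≤ m → m ≤ ℓ → ∃ c : ℝ, 0 < c ∧ ∀ y : ℝ, 2 ≤ y →
      |(primePi y : ℝ) - alpha m y| ≤ c * y / (Real.log y) ^ (m + 1)) :
    (fun x : ℝ =>
        (∑ p ∈ primesUpTo (Real.sqrt x), (primePi (x / (p : ℝ)) : ℝ))
          - ∑ n ∈ Finset.Icc 1 ℓ,
              (Nat.factorial (n - 1) : ℝ) * (x * S n x) / (Real.log x) ^ n)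
      =o[atTop] (fun x : ℝ => x / (Real.log x) ^ ℓ) := by
  obtain ⟨c, hc, hPNTℓ⟩ := hPNT ℓ hℓ le_rfl
  obtain ⟨c₁, hc₁, hPNT₁⟩ := hPNT 1 le_rfl hℓ
  have hrecip : (fun z => ∑ p ∈ primesUpTo z, 1 / (p : ℝ)) =o[atTop] log :=
    isLittleO_sum_inv_primesUpTo_log (by positivity)
      fun y hy => primePi_le_of_abs_sub_alpha_one_le hc₁.le hPNT₁ hy
  have hlog_sqrt : (fun x => log √x) =O[atTop] log :=
    ((isBigO_refl log atTop).const_mul_left (1 / 2)).congr'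
      (by filter_upwards [eventually_ge_atTop 0] with x hx; rw [log_sqrt hx]; ring) .rfl
  have hrecip_sqrt : (fun x => ∑ p ∈ primesUpTo √x, 1 / (p : ℝ)) =o[atTop] log :=
    (hrecip.comp_tendsto tendsto_sqrt_atTop).trans_isBigO hlog_sqrt
  refine (isBigO_sum_primePi_sub_main_term hc.le hPNTℓ).trans_isLittleO
    (((isBigO_refl _ atTop).mul_isLittleO hrecip_sqrt).congr' .rfl ?_)
  filter_upwards [eventually_gt_atTop 1] with x hx
  have := log_pos hx
  field_simp
  ring
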